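/- arXiv:2008.01368 — 4 statements merged into one kernel-verified Lean document; each statement's English description precedes it below -/
import Mathlib

section
/- For every integer x ≥ 2, we have P(x) ≤ x/2. -/
open scoped Classical

/-- The largest element of ℙ*₁ = ℙ* ∪ {1} (prime-powers together with 1) not exceeding `x`. -/
noncomputable def q (x : ℕ) : ℕ :=
  sSup {m : ℕ | (IsPrimePow m ∨ m = 1) ∧ m ≤ x}

/-- The prime-power map. -/
noncomputable def P (x : ℕ) : ℕ :=
  if x = 1 then 1
  else if IsPrimePow x then x / x.minFac
  else x - q x

/-- The orbit of `x` under `P`: `orbit x 1 = x` and `orbit x (n+1) = P (orbit x n)`. -/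
noncomputable def orbit (x n : ℕ) : ℕ := P^[n - 1] x

/-- The transient length `T x = min {n ≥ 1 : x_n = 1}`. -/
noncomputable def T (x : ℕ) : ℕ := sInf {n : ℕ | 1 ≤ n ∧ orbit x n = 1}

/-- The settling time `S x = min {n ≥ 1 : x_n ∈ ℙ*₁}`. -/
noncomputable def S (x : ℕ) : ℕ :=
  sInf {n : ℕ | 1 ≤ n ∧ (IsPrimePow (orbit x n) ∨ orbit x n = 1)}

/-
By Bertrand's postulate there is a prime `p` with `x / 2 < p ≤ x`, so `q x > x / 2` and
`x - q x < x / 2` when `x` is not a prime-power. For a prime-power `x = p ^ k`,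
`P x = x / p ≤ x / 2` since `p ≥ 2`.
-/

lemma q_le_self (x : ℕ) : q x ≤ x :=
  csSup_le' fun _ hm => hm.2

lemma le_q_of_isPrimePow {m x : ℕ} (hm : IsPrimePow m) (hmx : m ≤ x) : m ≤ q x :=
  le_csSup ⟨x, fun _ hn => hn.2⟩ ⟨Or.inl hm, hmx⟩

lemma lt_two_mul_q {x : ℕ} (hx : 2 ≤ x) : x < 2 * q x := by
  obtain ⟨p, hp, hlt, hle⟩ := Nat.exists_prime_lt_and_le_two_mul (x / 2) (by omega)
  have hpq : p ≤ q x := le_q_of_isPrimePow hp.isPrimePow (by omega)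
  omega

lemma two_mul_P_le {x : ℕ} (hx : 2 ≤ x) : 2 * P x ≤ x := by
  unfold P
  rw [if_neg (by omega)]
  split_ifs
  · have hfac : 2 ≤ x.minFac := (Nat.minFac_prime (by omega)).two_le
    calc 2 * (x / x.minFac) ≤ x.minFac * (x / x.minFac) := Nat.mul_le_mul_right _ hfac
      _ ≤ x := Nat.mul_div_le x x.minFac
  · have hq_gt := lt_two_mul_q hx
    have hq_le := q_le_self x
    omega

theorem stmt_0 (x : ℕ) (hx : 2 ≤ x) : (P x : ℝ) ≤ (x : ℝ) / 2 := by
  have h : ((2 * P x : ℕ) : ℝ) ≤ x := by exact_mod_cast two_mul_P_le hx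
  push_cast at h
  linarith
end

section
/- For every positive integer x, T(x) ≤ log₂ x + 1 (where log₂ is the real base-2 logarithm), with equality if and only if x is a power of 2 (i.e., x = 2^k for some integer k ≥ 0). -/
open scoped Classical

/-!
Every step of the orbit at least halves the current value, and halves it exactly only at a
power of two: a prime power `p ^ k` goes to `p ^ (k - 1)`, while for any other `x` Bertrand's
postulate gives a prime in `(x / 2, x]`, so `q x > x / 2` and `P x = x - q x < x / 2`.
Hence `2 ^ T x ≤ 2 * x`, strictly unless `x` is a power of two, and `T (2 ^ k) = k + 1`.
-/

lemma q_mem {x : ℕ} (hx : 1 ≤ x) : (IsPrimePow (q x) ∨ q x = 1) ∧ q x ≤ x :=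
  Nat.sSup_mem (s := {m : ℕ | (IsPrimePow m ∨ m = 1) ∧ m ≤ x}) ⟨1, Or.inr rfl, hx⟩
    ⟨x, fun _ hm => hm.2⟩

lemma le_q {m x : ℕ} (hm : IsPrimePow m ∨ m = 1) (hmx : m ≤ x) : m ≤ q x :=
  le_csSup ⟨x, fun _ hm' => hm'.2⟩ ⟨hm, hmx⟩

lemma q_lt_self {x : ℕ} (hx : 2 ≤ x) (hpp : ¬ IsPrimePow x) : q x < x := by
  obtain ⟨hq, hqx⟩ := q_mem (x := x) (by omega)
  refine lt_of_le_of_ne hqx fun h => ?_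
  rcases hq with hq | hq
  · exact hpp (h ▸ hq)
  · omega

lemma minFac_mul_P {x : ℕ} (hpp : IsPrimePow x) : x.minFac * P x = x := by
  rw [P, if_neg hpp.ne_one, if_pos hpp]
  exact Nat.mul_div_cancel' x.minFac_dvd

lemma P_add_q {x : ℕ} (hx : 2 ≤ x) (hpp : ¬ IsPrimePow x) : P x + q x = x := by
  rw [P, if_neg (by omega), if_neg hpp]
  exact Nat.sub_add_cancel (q_lt_self hx hpp).le

lemma P_pos {x : ℕ} (hx : 2 ≤ x) : 0 < P x := by
  by_cases hpp : IsPrimePow x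
  · exact Nat.pos_of_mul_pos_left ((minFac_mul_P hpp).symm ▸ (by omega : 0 < x))
  · have := P_add_q hx hpp
    have := q_lt_self hx hpp
    omega

lemma two_mul_P_lt {x : ℕ} (hx : 2 ≤ x) (hx2 : ¬ ∃ k, x = 2 ^ k) : 2 * P x < x := by
  by_cases hpp : IsPrimePow x
  · have hmin : x.minFac ≠ 2 := fun h =>
      hx2 ⟨_, (h ▸ hpp.minFac_pow_factorization_eq).symm⟩
    have : 3 ≤ x.minFac := by
      have := (Nat.minFac_prime (by omega : x ≠ 1)).two_le
      omega
    have := minFac_mul_P hpp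
    have := P_pos hx
    nlinarith
  · have := P_add_q hx hpp
    have := lt_two_mul_q hx
    omega

lemma P_lt_self {x : ℕ} (hx : 2 ≤ x) : P x < x := by
  have := two_mul_P_le hx
  have := P_pos hx
  omega

lemma orbit_one (x : ℕ) : orbit x 1 = x := rfl

lemma orbit_succ_succ (x n : ℕ) : orbit x (n + 2) = orbit (P x) (n + 1) :=
  Function.iterate_succ_apply P n x

lemma exists_orbit_eq_one {x : ℕ} (hx : 1 ≤ x) : ∃ n, 1 ≤ n ∧ orbit x n = 1 := by
  induction x using Nat.strong_induction_on with
  | _ x ih =>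
    rcases hx.eq_or_lt with rfl | hx2
    · exact ⟨1, le_rfl, rfl⟩
    · obtain ⟨n, hn, hPn⟩ := ih (P x) (P_lt_self hx2) (P_pos hx2)
      obtain ⟨m, rfl⟩ := Nat.exists_eq_add_of_le' hn
      exact ⟨m + 2, by omega, by rw [orbit_succ_succ, hPn]⟩

lemma T_spec {x : ℕ} (hx : 1 ≤ x) : 1 ≤ T x ∧ orbit x (T x) = 1 :=
  Nat.sInf_mem (exists_orbit_eq_one hx)

lemma T_one : T 1 = 1 :=
  le_antisymm (Nat.sInf_le ⟨le_rfl, rfl⟩) (T_spec le_rfl).1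

lemma T_eq_T_P_add_one {x : ℕ} (hx : 2 ≤ x) : T x = T (P x) + 1 := by
  obtain ⟨hTP, hTP1⟩ := T_spec (P_pos hx)
  obtain ⟨hT, hT1⟩ := T_spec (x := x) (by omega)
  obtain ⟨m, hm⟩ := Nat.exists_eq_add_of_le' hTP
  have hT2 : 2 ≤ T x := by
    by_contra! h
    rw [show T x = 1 by omega, orbit_one] at hT1
    omega
  obtain ⟨n, hn⟩ := Nat.exists_eq_add_of_le' hT2
  have hle : T x ≤ T (P x) + 1 :=
    Nat.sInf_le ⟨by omega, by rw [hm, orbit_succ_succ, ← hm, hTP1]⟩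
  have hge : T (P x) ≤ n + 1 :=
    Nat.sInf_le ⟨by omega, by rw [← orbit_succ_succ, ← hn, hT1]⟩
  omega

lemma T_two_pow (k : ℕ) : T (2 ^ k) = k + 1 := by
  induction k with
  | zero => exact T_one
  | succ k ih =>
    have hpp : IsPrimePow (2 ^ (k + 1)) := Nat.prime_two.isPrimePow.pow (by omega)
    have hP : P (2 ^ (k + 1)) = 2 ^ k := by
      have := minFac_mul_P hpp
      rw [Nat.prime_two.pow_minFac (by omega)] at this
      exact Nat.eq_of_mul_eq_mul_left two_pos (this.trans (pow_succ' 2 k))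
    rw [T_eq_T_P_add_one (Nat.le_self_pow (by omega) 2), hP, ih]

lemma two_pow_T_le {x : ℕ} (hx : 1 ≤ x) : 2 ^ T x ≤ 2 * x := by
  induction x using Nat.strong_induction_on with
  | _ x ih =>
    rcases hx.eq_or_lt with rfl | hx2
    · simp [T_one]
    · rw [T_eq_T_P_add_one hx2, pow_succ']
      have := ih (P x) (P_lt_self hx2) (P_pos hx2)
      have := two_mul_P_le hx2
      omega

lemma two_pow_T_lt {x : ℕ} (hx : 1 ≤ x) (hx2 : ¬ ∃ k, x = 2 ^ k) : 2 ^ T x < 2 * x := by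
  have hx2' : 2 ≤ x := by
    by_contra! h
    exact hx2 ⟨0, by omega⟩
  rw [T_eq_T_P_add_one hx2', pow_succ']
  have := two_pow_T_le (P_pos hx2')
  have := two_mul_P_lt hx2' hx2
  omega

theorem stmt_1 (x : ℕ) (hx : 1 ≤ x) :
    (T x : ℝ) ≤ Real.logb 2 x + 1 ∧
    ((T x : ℝ) = Real.logb 2 x + 1 ↔ ∃ k : ℕ, x = 2 ^ k) := by
  have hx0 : (0 : ℝ) < 2 * x := by positivity
  have hlog : Real.logb 2 x + 1 = Real.logb 2 (2 * x) := by
    rw [Real.logb_mul (by norm_num) (by positivity), Real.logb_self_eq_one (by norm_num), add_comm]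
  rw [hlog]
  have hle : (T x : ℝ) ≤ Real.logb 2 (2 * x) := by
    rw [Real.le_logb_iff_rpow_le (by norm_num) hx0, Real.rpow_natCast]
    exact_mod_cast two_pow_T_le hx
  refine ⟨hle, fun heq => ?_, ?_⟩
  · by_contra hx2
    have hlt : (T x : ℝ) < Real.logb 2 (2 * x) := by
      rw [Real.lt_logb_iff_rpow_lt (by norm_num) hx0, Real.rpow_natCast]
      exact_mod_cast two_pow_T_lt hx hx2
    exact hlt.ne heq
  · rintro ⟨k, rfl⟩
    rw [T_two_pow, ← hlog]
    push_cast
    rw [Real.logb_pow, Real.logb_self_eq_one (by norm_num)]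
    ring
end

section
/- For every integer x ≥ 2 that is not prime, x and x − p(x) are coprime, where p(x) denotes the largest element of ℙ ∪ {0,1} not exceeding x. -/
/-!
For `x ≥ 2` the number `p = p(x)` is the largest prime `≤ x`, and `gcd(x, x - p) = gcd(x, p)` is
`1` or `p`. If `p ∣ x` with `x` composite, then `2p ≤ x`, and Bertrand's postulate gives a prime
in `(p, 2p]`, contradicting the maximality of `p`.
-/

/-- The largest element of ℙ ∪ {0,1} not exceeding `x` (Pillai's function `p(x)`). -/
noncomputable def pPillai (x : ℕ) : ℕ :=
  sSup {m : ℕ | (m.Prime ∨ m = 0 ∨ m = 1) ∧ m ≤ x}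

namespace Pillai

variable {x : ℕ}

lemma pPillai_bddAbove (x : ℕ) : BddAbove {m : ℕ | (m.Prime ∨ m = 0 ∨ m = 1) ∧ m ≤ x} :=
  ⟨x, fun _ hm => hm.2⟩

lemma le_pPillai_of_prime {q : ℕ} (hq : q.Prime) (hqx : q ≤ x) : q ≤ pPillai x :=
  le_csSup (pPillai_bddAbove x) ⟨Or.inl hq, hqx⟩

lemma pPillai_mem (hx : 2 ≤ x) :
    pPillai x ∈ {m : ℕ | (m.Prime ∨ m = 0 ∨ m = 1) ∧ m ≤ x} :=
  Nat.sSup_mem ⟨2, Or.inl Nat.prime_two, hx⟩ (pPillai_bddAbove x)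

lemma prime_pPillai (hx : 2 ≤ x) : (pPillai x).Prime := by
  have h2 : 2 ≤ pPillai x := le_pPillai_of_prime Nat.prime_two hx
  rcases (pPillai_mem hx).1 with h | h | h
  · exact h
  all_goals omega

lemma not_pPillai_dvd (hx : 2 ≤ x) (hnp : ¬ x.Prime) : ¬ pPillai x ∣ x := by
  rintro ⟨k, hk⟩
  have hp := prime_pPillai hx
  have hk2 : 2 ≤ k := by
    rcases k with _ | _ | k
    · omega
    · exact absurd (by simpa using hk) (fun h : x = pPillai x => hnp (h ▸ hp))
    · omega
  have h2p : 2 * pPillai x ≤ x :=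
    calc 2 * pPillai x = pPillai x * 2 := mul_comm _ _
      _ ≤ pPillai x * k := Nat.mul_le_mul_left _ hk2
      _ = x := hk.symm
  obtain ⟨q, hq, hpq, hq2p⟩ := Nat.exists_prime_lt_and_le_two_mul _ hp.ne_zero
  exact absurd (le_pPillai_of_prime hq (hq2p.trans h2p)) (not_le.mpr hpq)

lemma coprime_sub_prime_of_not_dvd {p : ℕ} (hp : p.Prime) (hpx : p ≤ x) (hndvd : ¬ p ∣ x) :
    Nat.Coprime x (x - p) := by
  rw [Nat.Coprime, Nat.gcd_self_sub_right hpx]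
  exact ((hp.coprime_iff_not_dvd).mpr hndvd).symm

end Pillai

open Pillai in
theorem stmt_9 (x : ℕ) (hx : 2 ≤ x) (hnp : ¬ x.Prime) :
    Nat.Coprime x (x - pPillai x) :=
  coprime_sub_prime_of_not_dvd (prime_pPillai hx) (pPillai_mem hx).2 (not_pPillai_dvd hx hnp)
end

section
/- Fix a prime p. For every positive integer x: T_p(x) = 𝒮*_p(x) + ν_p(x) if p ∣ x, and T_p(x) = 𝒮*_p(x) + 1 otherwise; L_p(x) = 1 if p ∣ x, and L_p(x) = x mod p otherwise; S_p(x) = 𝒮*_p(x) if p ∣ x, and S_p(x) = 𝒮*_p(x) + 1 otherwise; A_p(x) = p^{ν_p(x)} if p ∣ x, and A_p(x) = x mod p otherwise. -/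
open scoped Classical

/-- The map `P_p`: fixes `1, …, p−1`, divides powers of `p` by `p`, and otherwise
subtracts the largest power of `p` not exceeding the argument. -/
noncomputable def Pp (p x : ℕ) : ℕ :=
  if x ≤ p - 1 then x
  else if ∃ k : ℕ, x = p ^ k then x / p
  else x - sSup {m : ℕ | (∃ k : ℕ, m = p ^ k) ∧ m ≤ x}

/-- The orbit of `x` under `P_p`: `orbitp p x 1 = x`, `orbitp p x (n+1) = P_p (orbitp p x n)`. -/
noncomputable def orbitp (p x n : ℕ) : ℕ := (Pp p)^[n - 1] x

/-- The transient length `T_p x = min {n ≥ 1 : x_n ∈ {1,…,p−1}}`. -/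
noncomputable def Tp (p x : ℕ) : ℕ :=
  sInf {n : ℕ | 1 ≤ n ∧ 1 ≤ orbitp p x n ∧ orbitp p x n ≤ p - 1}

/-- The limit `L_p x = x_{T_p x}`. -/
noncomputable def Lp (p x : ℕ) : ℕ := orbitp p x (Tp p x)

/-- The settling time `S_p x = min {n ≥ 1 : x_n ∈ {1,…,p−1} ∪ {p^k : k ≥ 1}}`. -/
noncomputable def Sp (p x : ℕ) : ℕ :=
  sInf {n : ℕ | 1 ≤ n ∧
    ((1 ≤ orbitp p x n ∧ orbitp p x n ≤ p - 1) ∨ ∃ k : ℕ, 1 ≤ k ∧ orbitp p x n = p ^ k)}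

/-- The attractor `A_p x = x_{S_p x}`. -/
noncomputable def Ap (p x : ℕ) : ℕ := orbitp p x (Sp p x)

/-- `𝒮*_p(x)`: the sum of the base-`p` digits of `x` minus `x mod p`. -/
def Sstar (p x : ℕ) : ℕ := (Nat.digits p x).sum - x % p

/-!
Outside the digits `1, …, p - 1` and the powers of `p`, the map `P_p` lowers the leading base-`p`
digit of `x` by one. This lowers the digit sum by one and keeps both `x mod p` and `ν_p(x)`, so
`T_p` and `S_p` drop by one while `L_p` and `A_p` stay put. Induction along this descent reduces
everything to the digits, where all four quantities are immediate, and to the powers `p ^ k`,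
whose orbit `p ^ k, …, p, 1` is explicit.
-/

namespace Function

variable {α : Type*} (f : α → α) (Q : α → Prop)

/-- Orbits are indexed from `1`, as in `orbitp`; the value is `0` exactly when the orbit never
meets `Q` (`sInf ∅ = 0`). -/
noncomputable def hitTime (x : α) : ℕ := sInf {n | 1 ≤ n ∧ Q (f^[n - 1] x)}

noncomputable def hitPoint (x : α) : α := f^[hitTime f Q x - 1] x

variable {f Q} {x : α}

theorem hitTime_of_mem (hx : Q x) : hitTime f Q x = 1 :=
  le_antisymm (Nat.sInf_le ⟨le_rfl, hx⟩) (Nat.sInf_mem (s := {n | 1 ≤ n ∧ Q (f^[n - 1] x)})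
    ⟨1, le_rfl, hx⟩).1

theorem hitPoint_of_mem (hx : Q x) : hitPoint f Q x = x := by
  rw [hitPoint, hitTime_of_mem hx]; rfl

theorem hitTime_of_not_mem (hx : ¬ Q x) (hfx : hitTime f Q (f x) ≠ 0) :
    hitTime f Q x = hitTime f Q (f x) + 1 := by
  set N := hitTime f Q (f x)
  set M := hitTime f Q x
  have hN : 1 ≤ N ∧ Q (f^[N - 1] (f x)) :=
    Nat.sInf_mem (Nat.nonempty_of_pos_sInf (Nat.pos_of_ne_zero hfx))
  have hNx : N + 1 ∈ {n | 1 ≤ n ∧ Q (f^[n - 1] x)} := by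
    refine ⟨Nat.le_add_left 1 N, ?_⟩
    rw [Nat.add_sub_cancel, ← Nat.sub_add_cancel hN.1, iterate_succ_apply]
    exact hN.2
  obtain ⟨hM1, hM2⟩ : 1 ≤ M ∧ Q (f^[M - 1] x) := Nat.sInf_mem ⟨_, hNx⟩
  have hM : M ≠ 1 := fun h => hx (by simpa [h] using hM2)
  have hMf : M - 1 ∈ {n | 1 ≤ n ∧ Q (f^[n - 1] (f x))} := by
    refine ⟨by omega, ?_⟩
    rwa [← iterate_succ_apply, Nat.succ_eq_add_one, Nat.sub_add_cancel (by omega)]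
  have hMN : M ≤ N + 1 := Nat.sInf_le hNx
  have hNM : N ≤ M - 1 := Nat.sInf_le hMf
  omega

theorem hitPoint_of_not_mem (hx : ¬ Q x) (hfx : hitTime f Q (f x) ≠ 0) :
    hitPoint f Q x = hitPoint f Q (f x) := by
  rw [hitPoint, hitPoint, hitTime_of_not_mem hx hfx, Nat.add_sub_cancel,
    ← Nat.sub_add_cancel (Nat.pos_of_ne_zero hfx), iterate_succ_apply, Nat.add_sub_cancel]

end Function

namespace Nat

variable {b : ℕ}

theorem digits_sum_eq_mod_add_digits_sum_div (hb : 1 < b) (n : ℕ) :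
    (b.digits n).sum = n % b + (b.digits (n / b)).sum := by
  rcases n.eq_zero_or_pos with rfl | hn
  · simp
  · rw [digits_def' hb hn, List.sum_cons]

theorem digits_sum_pos {n : ℕ} (hn : 0 < n) : 0 < (b.digits n).sum :=
  Nat.pos_of_ne_zero fun h => getLast_digit_ne_zero b hn.ne' <|
    List.sum_eq_zero_iff.mp h _ (List.getLast_mem _)

theorem digits_sum_pow (hb : 1 < b) (k : ℕ) : (b.digits (b ^ k)).sum = 1 := by
  simpa [digits_of_lt b 1 one_ne_zero hb] using
    congrArg List.sum (digits_base_pow_mul (k := k) hb one_pos)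

theorem digits_sum_add_pow (hb : 1 < b) {d y : ℕ} (hy : y < (b - 1) * b ^ d) :
    (b.digits (y + b ^ d)).sum = (b.digits y).sum + 1 := by
  induction d generalizing y with
  | zero =>
    have hy1 : y + 1 < b := by rw [pow_zero, mul_one] at hy; omega
    rw [digits_sum_eq_mod_add_digits_sum_div hb, digits_sum_eq_mod_add_digits_sum_div hb y,
      pow_zero, div_eq_of_lt hy1, div_eq_of_lt (by omega), mod_eq_of_lt hy1,
      mod_eq_of_lt (by omega)]
    ring
  | succ d ih =>
    have hyb : y / b < (b - 1) * b ^ d := by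
      rw [Nat.div_lt_iff_lt_mul (by omega), mul_assoc, ← pow_succ]; exact hy
    rw [digits_sum_eq_mod_add_digits_sum_div hb, digits_sum_eq_mod_add_digits_sum_div hb y,
      pow_succ, add_mul_mod_self_right, add_mul_div_right _ _ (by omega), ih hyb]
    ring

theorem add_pow_lt_pow_succ (hb : 1 < b) {d y : ℕ} (hy : y < (b - 1) * b ^ d) :
    y + b ^ d < b ^ (d + 1) := by
  have : (b - 1) * b ^ d + b ^ d = b ^ (d + 1) := by
    rw [← Nat.succ_mul, Nat.succ_eq_add_one, Nat.sub_add_cancel hb.le, ← pow_succ']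
  omega

theorem ne_pow_of_pow_lt_of_lt_pow_succ (hb : 1 < b) {d x : ℕ} (h₁ : b ^ d < x)
    (h₂ : x < b ^ (d + 1)) (k : ℕ) : x ≠ b ^ k := by
  rintro rfl
  rw [Nat.pow_lt_pow_iff_right hb] at h₁ h₂
  omega

@[elab_as_elim]
theorem leading_digit_induction (hb : 1 < b) {P : ℕ → Prop}
    (digit : ∀ x, 0 < x → x < b → P x) (pow : ∀ k, P (b ^ (k + 1)))
    (add_pow : ∀ y d, 0 < y → y < (b - 1) * b ^ (d + 1) → P y → P (y + b ^ (d + 1)))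
    (x : ℕ) (hx : 0 < x) : P x := by
  induction x using Nat.strong_induction_on with
  | _ x ih =>
  rcases lt_or_ge x b with hxb | hbx
  · exact digit x hx hxb
  obtain ⟨d, hd⟩ : ∃ d, log b x = d + 1 := ⟨log b x - 1, by have := log_pos hb hbx; omega⟩
  have hle : b ^ (d + 1) ≤ x := hd ▸ pow_log_le_self b hx.ne'
  have hlt : x < b ^ (d + 1) * b := hd ▸ (pow_succ b _).symm ▸ lt_pow_succ_log_self hb x
  have hpos : 0 < b ^ (d + 1) := by positivity
  rcases hle.eq_or_lt with heq | hlt'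
  · exact heq ▸ pow d
  · have hy : x - b ^ (d + 1) < (b - 1) * b ^ (d + 1) := by
      rw [Nat.sub_one_mul]; rw [mul_comm] at hlt; omega
    have := add_pow _ d (by omega) hy (ih _ (by omega) (by omega))
    rwa [Nat.sub_add_cancel hle] at this

end Nat

section padicValNat

variable {p : ℕ} [hp : Fact p.Prime]

theorem padicValNat_pow_mul_of_not_dvd (v : ℕ) {m : ℕ} (hm : ¬ p ∣ m) :
    padicValNat p (p ^ v * m) = v := by
  rw [padicValNat.mul (pow_ne_zero _ hp.out.ne_zero) (by rintro rfl; simp at hm),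
    padicValNat.prime_pow, padicValNat.eq_zero_of_not_dvd hm, add_zero]

theorem padicValNat_add_pow {d y : ℕ} (hy : 0 < y)
    (hyd : y < (p - 1) * p ^ d) : padicValNat p (y + p ^ d) = padicValNat p y := by
  have hp1 := hp.out.one_lt
  obtain ⟨v, m, hm, rfl⟩ := Nat.exists_eq_pow_mul_and_not_dvd hy.ne' p hp.out.ne_one
  have hm0 : 0 < m := Nat.pos_of_ne_zero (by rintro rfl; simp at hm)
  have hvd : v ≤ d := by
    have : p ^ v < p ^ (d + 1) := calc
      p ^ v ≤ p ^ v * m := Nat.le_mul_of_pos_right _ hm0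
      _ < (p - 1) * p ^ d := hyd
      _ < p ^ (d + 1) := by rw [pow_succ, mul_comm]; gcongr; omega
    rw [Nat.pow_lt_pow_iff_right hp1] at this
    omega
  have hsum : p ^ v * m + p ^ d = p ^ v * (m + p ^ (d - v)) := by
    rw [mul_add, ← pow_add, Nat.add_sub_cancel' hvd]
  have hndvd : ¬ p ∣ m + p ^ (d - v) := by
    rcases hvd.lt_or_eq with hlt | rfl
    · rwa [Nat.dvd_add_left (dvd_pow_self p (by omega))]
    · have : m < p - 1 := by
        rw [mul_comm] at hyd; exact Nat.lt_of_mul_lt_mul_right hyd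
      rw [Nat.sub_self, pow_zero]
      exact Nat.not_dvd_of_pos_of_lt (by omega) (by omega)
  rw [hsum, padicValNat_pow_mul_of_not_dvd _ hndvd, padicValNat_pow_mul_of_not_dvd _ hm]

end padicValNat

section Pp

variable {p : ℕ}

theorem Pp_pow_succ (hp : 1 < p) (k : ℕ) : Pp p (p ^ (k + 1)) = p ^ k := by
  have : ¬ p ^ (k + 1) ≤ p - 1 := by
    have := Nat.le_self_pow (n := k + 1) (by omega) p; omega
  rw [Pp, if_neg this, if_pos ⟨_, rfl⟩, pow_succ, Nat.mul_div_cancel _ (by omega)]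

theorem Pp_add_pow_succ (hp : 1 < p) {d y : ℕ} (hy : 0 < y) (hyd : y < (p - 1) * p ^ (d + 1)) :
    Pp p (y + p ^ (d + 1)) = y := by
  have hlt := Nat.add_pow_lt_pow_succ hp hyd
  have hgt : p ^ (d + 1) < y + p ^ (d + 1) := by omega
  have hmax : IsGreatest {m | (∃ k, m = p ^ k) ∧ m ≤ y + p ^ (d + 1)} (p ^ (d + 1)) := by
    refine ⟨⟨⟨_, rfl⟩, hgt.le⟩, ?_⟩
    rintro m ⟨⟨k, rfl⟩, hk⟩
    exact Nat.pow_le_pow_right hp.le (Nat.lt_succ_iff.mp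
      ((Nat.pow_lt_pow_iff_right hp).mp (hk.trans_lt hlt)))
  have : ¬ y + p ^ (d + 1) ≤ p - 1 := by
    have := Nat.le_self_pow (n := d + 1) (by omega) p; omega
  have hpow : ¬ ∃ k, y + p ^ (d + 1) = p ^ k := fun ⟨k, hk⟩ =>
    Nat.ne_pow_of_pow_lt_of_lt_pow_succ hp hgt hlt k hk
  rw [Pp, if_neg this, if_neg hpow, hmax.csSup_eq, Nat.add_sub_cancel]

end Pp

section Sstar

variable {p : ℕ} (hp : 1 < p)
include hp

theorem Sstar_eq_digits_sum_div (x : ℕ) : Sstar p x = (p.digits (x / p)).sum := by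
  rw [Sstar, Nat.digits_sum_eq_mod_add_digits_sum_div hp, Nat.add_sub_cancel_left]

theorem Sstar_of_lt {x : ℕ} (h : x < p) : Sstar p x = 0 := by
  simp [Sstar_eq_digits_sum_div hp, Nat.div_eq_of_lt h]

theorem Sstar_pow_succ (k : ℕ) : Sstar p (p ^ (k + 1)) = 1 := by
  rw [Sstar_eq_digits_sum_div hp, pow_succ, Nat.mul_div_cancel _ (by omega),
    Nat.digits_sum_pow hp]

theorem Sstar_add_pow_succ {d y : ℕ} (hyd : y < (p - 1) * p ^ (d + 1)) :
    Sstar p (y + p ^ (d + 1)) = Sstar p y + 1 := by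
  have hyp : y / p < (p - 1) * p ^ d := by
    rw [Nat.div_lt_iff_lt_mul (by omega), mul_assoc, ← pow_succ]; exact hyd
  rw [Sstar_eq_digits_sum_div hp, Sstar_eq_digits_sum_div hp, pow_succ,
    Nat.add_mul_div_right _ _ (by omega), Nat.digits_sum_add_pow hp hyp]

theorem one_le_Sstar_of_dvd {x : ℕ} (hx : 0 < x) (h : p ∣ x) : 1 ≤ Sstar p x := by
  rw [Sstar_eq_digits_sum_div hp]
  exact Nat.digits_sum_pos (Nat.div_pos (Nat.le_of_dvd hx h) (by omega))

end Sstar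

section Orbit

open Function

variable {p x : ℕ}

def IsNonzeroDigit (p y : ℕ) : Prop := 1 ≤ y ∧ y ≤ p - 1

def IsDigitOrPow (p y : ℕ) : Prop := IsNonzeroDigit p y ∨ ∃ k, 1 ≤ k ∧ y = p ^ k

theorem not_isNonzeroDigit_of_le (h : p ≤ x) : ¬ IsNonzeroDigit p x :=
  fun ⟨h₁, h₂⟩ => by omega

theorem not_isDigitOrPow_add_pow_succ (hp : 1 < p) {d y : ℕ} (hy : 0 < y)
    (hyd : y < (p - 1) * p ^ (d + 1)) : ¬ IsDigitOrPow p (y + p ^ (d + 1)) := by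
  rintro (h | ⟨k, -, hk⟩)
  · exact not_isNonzeroDigit_of_le
      ((Nat.le_self_pow d.add_one_ne_zero p).trans (Nat.le_add_left _ _)) h
  · exact Nat.ne_pow_of_pow_lt_of_lt_pow_succ hp (by omega) (Nat.add_pow_lt_pow_succ hp hyd) k hk

theorem Tp_Lp_of_isNonzeroDigit (h : IsNonzeroDigit p x) : Tp p x = 1 ∧ Lp p x = x :=
  ⟨hitTime_of_mem h, hitPoint_of_mem h⟩

theorem Tp_Lp_of_not_isNonzeroDigit (h : ¬ IsNonzeroDigit p x) (hT : Tp p (Pp p x) ≠ 0) :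
    Tp p x = Tp p (Pp p x) + 1 ∧ Lp p x = Lp p (Pp p x) :=
  ⟨hitTime_of_not_mem h hT, hitPoint_of_not_mem h hT⟩

theorem Sp_Ap_of_isDigitOrPow (h : IsDigitOrPow p x) : Sp p x = 1 ∧ Ap p x = x :=
  ⟨hitTime_of_mem h, hitPoint_of_mem h⟩

theorem Sp_Ap_of_not_isDigitOrPow (h : ¬ IsDigitOrPow p x) (hS : Sp p (Pp p x) ≠ 0) :
    Sp p x = Sp p (Pp p x) + 1 ∧ Ap p x = Ap p (Pp p x) :=
  ⟨hitTime_of_not_mem h hS, hitPoint_of_not_mem h hS⟩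

theorem Tp_Lp_pow (hp : 1 < p) (k : ℕ) : Tp p (p ^ k) = k + 1 ∧ Lp p (p ^ k) = 1 := by
  induction k with
  | zero => simpa using Tp_Lp_of_isNonzeroDigit (p := p) ⟨le_rfl, by omega⟩
  | succ k ih =>
    rw [← Pp_pow_succ hp] at ih
    have h := not_isNonzeroDigit_of_le (Nat.le_self_pow k.add_one_ne_zero p)
    have hstep := Tp_Lp_of_not_isNonzeroDigit h (by omega)
    exact ⟨by rw [hstep.1, ih.1], by rw [hstep.2, ih.2]⟩

end Orbit

section Formulas

variable {p : ℕ} [hp : Fact p.Prime]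

theorem Tp_Lp_eq {x : ℕ} (hx : 0 < x) :
    (Tp p x = if p ∣ x then Sstar p x + padicValNat p x else Sstar p x + 1) ∧
    (Lp p x = if p ∣ x then 1 else x % p) := by
  have hp1 := hp.out.one_lt
  refine Nat.leading_digit_induction hp1 (fun n hn hnp => ?_) (fun k => ?_)
    (fun y d hy hyd ih => ?_) x hx
  · rw [if_neg (Nat.not_dvd_of_pos_of_lt hn hnp), if_neg (Nat.not_dvd_of_pos_of_lt hn hnp),
      Sstar_of_lt hp1 hnp, Nat.mod_eq_of_lt hnp]
    exact Tp_Lp_of_isNonzeroDigit ⟨hn, by omega⟩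
  · simp only [dvd_pow_self p k.add_one_ne_zero, if_true, Sstar_pow_succ hp1,
      padicValNat.prime_pow, Tp_Lp_pow hp1, and_true]
    omega
  · have hT : Tp p y ≠ 0 := by
      split_ifs at ih with h
      · have := one_le_padicValNat_of_dvd hy.ne' h; omega
      · omega
    have hPp := Pp_add_pow_succ hp1 hy hyd
    have hstep := Tp_Lp_of_not_isNonzeroDigit
      (fun h => not_isDigitOrPow_add_pow_succ hp1 hy hyd (.inl h)) (by rwa [hPp])
    rw [hPp] at hstep
    have hmod : (y + p ^ (d + 1)) % p = y % p := by rw [pow_succ, Nat.add_mul_mod_self_right]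
    rw [hstep.1, hstep.2, ih.1, ih.2, Sstar_add_pow_succ hp1 hyd,
      padicValNat_add_pow hy hyd, hmod]
    simp only [Nat.dvd_add_left (dvd_pow_self p d.add_one_ne_zero), and_true]
    split_ifs <;> omega

theorem Sp_Ap_eq {x : ℕ} (hx : 0 < x) :
    (Sp p x = if p ∣ x then Sstar p x else Sstar p x + 1) ∧
    (Ap p x = if p ∣ x then p ^ padicValNat p x else x % p) := by
  have hp1 := hp.out.one_lt
  refine Nat.leading_digit_induction hp1 (fun n hn hnp => ?_) (fun k => ?_)
    (fun y d hy hyd ih => ?_) x hx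
  · rw [if_neg (Nat.not_dvd_of_pos_of_lt hn hnp), if_neg (Nat.not_dvd_of_pos_of_lt hn hnp),
      Sstar_of_lt hp1 hnp, Nat.mod_eq_of_lt hnp]
    exact Sp_Ap_of_isDigitOrPow (.inl ⟨hn, by omega⟩)
  · simp only [dvd_pow_self p k.add_one_ne_zero, if_true, Sstar_pow_succ hp1,
      padicValNat.prime_pow]
    exact Sp_Ap_of_isDigitOrPow (.inr ⟨k + 1, by omega, rfl⟩)
  · have hS : Sp p y ≠ 0 := by
      split_ifs at ih with h
      · have := one_le_Sstar_of_dvd hp1 hy h; omega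
      · omega
    have hPp := Pp_add_pow_succ hp1 hy hyd
    have hstep := Sp_Ap_of_not_isDigitOrPow (not_isDigitOrPow_add_pow_succ hp1 hy hyd)
      (by rwa [hPp])
    rw [hPp] at hstep
    have hmod : (y + p ^ (d + 1)) % p = y % p := by rw [pow_succ, Nat.add_mul_mod_self_right]
    rw [hstep.1, hstep.2, ih.1, ih.2, Sstar_add_pow_succ hp1 hyd,
      padicValNat_add_pow hy hyd, hmod]
    simp only [Nat.dvd_add_left (dvd_pow_self p d.add_one_ne_zero), and_true]
    split_ifs <;> omega

end Formulas

theorem stmt_18 (p : ℕ) (hp : p.Prime) (x : ℕ) (hx : 0 < x) :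
    (Tp p x = if p ∣ x then Sstar p x + padicValNat p x else Sstar p x + 1) ∧
    (Lp p x = if p ∣ x then 1 else x % p) ∧
    (Sp p x = if p ∣ x then Sstar p x else Sstar p x + 1) ∧
    (Ap p x = if p ∣ x then p ^ padicValNat p x else x % p) := by
  have := Fact.mk hp
  exact ⟨(Tp_Lp_eq hx).1, (Tp_Lp_eq hx).2, (Sp_Ap_eq hx).1, (Sp_Ap_eq hx).2⟩
end
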